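/- arXiv:1804.00080 — 2 statements merged into one kernel-verified Lean document; each statement's English description precedes it below -/
import Mathlib

section
/- Let α be a positive transcendental real number. Let G be the additive subgroup of ℝ² generated by the set { q·(α^{2i}, α^{-2i}) : q ∈ ℚ, i ∈ ℤ } ∪ { (α^{2i+1}, α^{-2i-1}) : i ∈ ℤ } ∪ { (2^{1/3}·α^{2i+1}, 0) : i ∈ ℤ }. Then I(G) = { [[α^{2n},0],[0,α^{-2n}]] : n ∈ ℤ }. -/
/-- For an additive subgroup `G` of `ℝ²` (elements viewed as row vectors), `IG G` is the
set of invertible real `2 × 2` matrices `B` of the form `[[a,0],[0,b]]` or `[[0,a],[b,0]]`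
with `a > 0`, `b > 0`, such that right multiplication by `B` maps `G` onto `G`. -/
def IG (G : AddSubgroup (Fin 2 → ℝ)) : Set (Matrix (Fin 2) (Fin 2) ℝ) :=
  {B | IsUnit B ∧
    (∃ a b : ℝ, 0 < a ∧ 0 < b ∧
      (B = Matrix.of ![![a, 0], ![0, b]] ∨ B = Matrix.of ![![0, a], ![b, 0]])) ∧
    (fun v => Matrix.vecMul v B) '' (G : Set (Fin 2 → ℝ)) = (G : Set (Fin 2 → ℝ))}

/-!
Every vector of `G` has the form `(F(α) + c·α·K(α²), F(α⁻¹))` with `F` a rational and `K` an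
integral Laurent polynomial, where `c = 2^{1/3}`. As `α` is transcendental and `c` is algebraic and
irrational, `1` and `c` are linearly independent over `ℚ(α)`, so such a vector determines `F`.

If `B = diag(a, b)` lies in `I(G)`, then `(cα, 0)` has image `(cαa, 0)` and a preimage `(cα/a, 0)`
in `G`, so `a = K(α²)` and `a⁻¹ = K'(α²)`. Hence `K` is a unit of `ℤ[T, T⁻¹]`, i.e. `±Tᵐ`, and
`a = α^{2m}`. The image `(α^{2m+1}, b/α)` of `(α, α⁻¹)` then forces `F = T^{2m+1}` and
`b = α^{-2m}`. An antidiagonal `B` would map `(cα, 0)` to `(0, cαa)`, whose first coordinate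
forces `F = 0` and so `cαa = 0`.
-/

open Polynomial hiding C
open LaurentPolynomial IntermediateField

namespace LaurentPolynomial

theorem eval₂_injective_of_transcendental {R A : Type*} [CommRing R] [CommRing A] [Algebra R A]
    {x : Aˣ} (hx : Transcendental R (x : A)) : Function.Injective (eval₂ (algebraMap R A) x) := by
  refine (injective_iff_map_eq_zero _).2 fun f hf => ?_
  obtain ⟨n, p, hp⟩ := exists_T_pow f
  have hp0 : p = 0 := transcendental_iff.1 hx p (by
    rw [aeval_def, ← eval₂_toLaurent, hp, map_mul, hf, zero_mul])
  rw [hp0, map_zero, eq_comm] at hp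
  exact (isUnit_T (n : ℤ)).mul_left_eq_zero.1 hp

theorem exists_eq_C_mul_T_of_isUnit {R : Type*} [CommRing R] [IsDomain R] {f : R[T;T⁻¹]}
    (hf : IsUnit f) : ∃ r n, IsUnit r ∧ f = C r * T n := by
  obtain ⟨g, hfg⟩ := hf.exists_right_inv
  obtain ⟨n, p, hp⟩ := exists_T_pow f
  obtain ⟨m, q, hq⟩ := exists_T_pow g
  have hpq : p * q = X ^ (n + m) := by
    apply toLaurent_injective
    rw [map_mul, hp, hq, toLaurent_X_pow, mul_mul_mul_comm, hfg, one_mul, ← T_add]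
    push_cast; rfl
  obtain ⟨j, -, hj⟩ := (dvd_prime_pow prime_X _).1 (Dvd.intro q hpq)
  obtain ⟨u, hu⟩ := hj.symm
  obtain ⟨r, hr, hru⟩ := Polynomial.isUnit_iff.1 u.isUnit
  refine ⟨r, j - n, hr, ?_⟩
  have hfT : f * T n = C r * T j := by
    rw [← hp, ← hu, ← hru, map_mul, toLaurent_X_pow, toLaurent_C, mul_comm]
  rw [T_sub, ← mul_assoc, ← hfT, mul_T_assoc, add_neg_cancel, T_zero, mul_one]

end LaurentPolynomial

/-- Over `K⟮c⟯` the element `x` is still transcendental, so `p + c q` vanishes coefficientwise. -/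
theorem Transcendental.eq_zero_of_aeval_add_mul_aeval_eq_zero {K L : Type*} [Field K] [Field L]
    [Algebra K L] {x c : L} (hx : Transcendental K x) (hc : IsAlgebraic K c)
    (hcK : c ∉ Set.range (algebraMap K L)) {p q : K[X]}
    (h : Polynomial.aeval x p + c * Polynomial.aeval x q = 0) : p = 0 ∧ q = 0 := by
  have := isAlgebraic_adjoin_simple hc.isIntegral
  have hr : p.map (algebraMap K K⟮c⟯) +
      Polynomial.C (AdjoinSimple.gen K c) * q.map (algebraMap K K⟮c⟯) = 0 :=
    transcendental_iff.1 (hx.extendScalars K⟮c⟯) _ (by simpa [aeval_map_algebraMap] using h)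
  have hq : q = 0 := by
    ext k
    by_contra hk
    have hcoeff := congrArg (fun r => algebraMap K⟮c⟯ L (r.coeff k)) hr
    simp only [coeff_add, coeff_map, coeff_C_mul, map_add, map_mul, coeff_zero, map_zero,
      AdjoinSimple.algebraMap_gen, ← IsScalarTower.algebraMap_apply] at hcoeff
    refine hcK ⟨-p.coeff k / q.coeff k, ?_⟩
    rw [map_div₀, map_neg, neg_div, neg_eq_iff_eq_neg, div_eq_iff (by simpa using hk)]
    linear_combination hcoeff
  exact ⟨transcendental_iff.1 hx p (by simpa [hq] using h), hq⟩

theorem LaurentPolynomial.eq_zero_of_eval₂_add_mul_eval₂_eq_zero {K L : Type*} [Field K]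
    [Field L] [Algebra K L] {x : Lˣ} {c : L} (hx : Transcendental K (x : L))
    (hc : IsAlgebraic K c) (hcK : c ∉ Set.range (algebraMap K L)) {F H : K[T;T⁻¹]}
    (h : eval₂ (algebraMap K L) x F + c * eval₂ (algebraMap K L) x H = 0) : F = 0 ∧ H = 0 := by
  obtain ⟨n, p, hp⟩ := exists_T_pow F
  obtain ⟨m, q, hq⟩ := exists_T_pow H
  have hpq := hx.eq_zero_of_aeval_add_mul_aeval_eq_zero hc hcK (p := p * X ^ m) (q := q * X ^ n)
    (by
      simp only [aeval_def, ← eval₂_toLaurent, map_mul, hp, hq, toLaurent_X_pow, eval₂_T,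
        zpow_natCast, Units.val_pow_eq_pow_val]
      linear_combination ((x : L) ^ n * (x : L) ^ m) * h)
  rw [mul_eq_zero, mul_eq_zero, or_iff_left (pow_ne_zero _ X_ne_zero),
    or_iff_left (pow_ne_zero _ X_ne_zero)] at hpq
  rw [hpq.1, map_zero, eq_comm, (isUnit_T _).mul_left_eq_zero] at hp
  rw [hpq.2, map_zero, eq_comm, (isUnit_T _).mul_left_eq_zero] at hq
  exact ⟨hp, hq⟩

theorem AddSubgroup.image_closure_eq_of_image_eq {G : Type*} [AddGroup G] (f : G →+ G)
    {S : Set G} (h : f '' S = S) : f '' (closure S : Set G) = closure S := by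
  rw [← coe_map, AddMonoidHom.map_closure, h]

theorem Matrix.vecMul_of_diag {R : Type*} [CommSemiring R] (v : Fin 2 → R) (a b : R) :
    vecMul v (of ![![a, 0], ![0, b]]) = ![v 0 * a, v 1 * b] := by
  ext i; fin_cases i <;> simp [vecMul, dotProduct, Fin.sum_univ_two]

theorem Matrix.vecMul_of_antidiag {R : Type*} [CommSemiring R] (v : Fin 2 → R) (a b : R) :
    vecMul v (of ![![0, a], ![b, 0]]) = ![v 1 * b, v 0 * a] := by
  ext i; fin_cases i <;> simp [vecMul, dotProduct, Fin.sum_univ_two]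

section IG

variable {G : AddSubgroup (Fin 2 → ℝ)} {B : Matrix (Fin 2) (Fin 2) ℝ}

theorem vecMul_mem_of_mem_IG (hB : B ∈ IG G) {v : Fin 2 → ℝ} (hv : v ∈ G) :
    Matrix.vecMul v B ∈ G :=
  (Set.image_eq_iff_surjOn_mapsTo.1 hB.2.2).2 hv

theorem exists_vecMul_eq_of_mem_IG (hB : B ∈ IG G) {v : Fin 2 → ℝ} (hv : v ∈ G) :
    ∃ w ∈ G, Matrix.vecMul w B = v :=
  (Set.image_eq_iff_surjOn_mapsTo.1 hB.2.2).1 hv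

end IG

def generators (α c : ℝ) : Set (Fin 2 → ℝ) :=
  {v | ∃ q : ℚ, ∃ i : ℤ, v = (q : ℝ) • ![α ^ (2 * i), α ^ (-(2 * i))]} ∪
  {v | ∃ i : ℤ, v = ![α ^ (2 * i + 1), α ^ (-(2 * i) - 1)]} ∪
  {v | ∃ i : ℤ, v = ![c * α ^ (2 * i + 1), 0]}

noncomputable def diagZpow (x : ℝˣ) (n : ℤ) : Matrix (Fin 2) (Fin 2) ℝ :=
  Matrix.of ![![(x : ℝ) ^ (2 * n), 0], ![0, (x : ℝ) ^ (-(2 * n))]]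

section Laurent

variable (x : ℝˣ) (c : ℝ)

noncomputable def laurentMap : ℚ[T;T⁻¹] × ℤ[T;T⁻¹] →+ (Fin 2 → ℝ) :=
  AddMonoidHom.mk'
    (fun FK => ![eval₂ (algebraMap ℚ ℝ) x FK.1 + c * x * eval₂ (algebraMap ℤ ℝ) (x ^ 2) FK.2,
      eval₂ (algebraMap ℚ ℝ) x (invert FK.1)])
    (fun FK GK => by
      simp only [Prod.fst_add, Prod.snd_add, map_add, mul_add, Matrix.cons_add_cons,
        Matrix.empty_add_empty, add_add_add_comm])

@[simp]
theorem laurentMap_apply (F : ℚ[T;T⁻¹]) (K : ℤ[T;T⁻¹]) :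
    laurentMap x c (F, K) = ![eval₂ (algebraMap ℚ ℝ) x F +
      c * x * eval₂ (algebraMap ℤ ℝ) (x ^ 2) K, eval₂ (algebraMap ℚ ℝ) x (invert F)] :=
  rfl

theorem closure_generators_le_range_laurentMap :
    AddSubgroup.closure (generators x c) ≤ (laurentMap x c).range := by
  refine (AddSubgroup.closure_le _).2 ?_
  rintro v ((⟨q, i, rfl⟩ | ⟨i, rfl⟩) | ⟨i, rfl⟩)
  · exact ⟨(C q * T (2 * i), 0), by ext j; fin_cases j <;> simp⟩
  · exact ⟨(T (2 * i + 1), 0), by ext j; fin_cases j <;> simp [sub_eq_neg_add]⟩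
  · refine ⟨(0, T i), ?_⟩
    rw [add_comm, zpow_add₀ x.ne_zero, zpow_one, zpow_mul, ← mul_assoc]
    ext j; fin_cases j <;> simp

end Laurent

section Transcendental

variable {x : ℝˣ} {c : ℝ}

theorem exists_eval₂_eq_mul_eval₂_sq (K : ℤ[T;T⁻¹]) :
    ∃ H : ℚ[T;T⁻¹], eval₂ (algebraMap ℚ ℝ) x H = x * eval₂ (algebraMap ℤ ℝ) (x ^ 2) K := by
  induction K using LaurentPolynomial.induction_on' with
  | add K₁ K₂ h₁ h₂ =>
    obtain ⟨H₁, h₁⟩ := h₁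
    obtain ⟨H₂, h₂⟩ := h₂
    exact ⟨H₁ + H₂, by rw [map_add, h₁, h₂, map_add, mul_add]⟩
  | C_mul_T n r =>
    exact ⟨C (r : ℚ) * T (1 + 2 * n), by simp [zpow_add₀ x.ne_zero, zpow_mul, mul_left_comm]⟩

theorem eq_of_mem_range_laurentMap (hx : Transcendental ℚ (x : ℝ)) (hc : IsAlgebraic ℚ c)
    (hc' : Irrational c) {F₀ : ℚ[T;T⁻¹]} {t : ℝ}
    (h : ![eval₂ (algebraMap ℚ ℝ) x F₀, t] ∈ (laurentMap x c).range) :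
    t = eval₂ (algebraMap ℚ ℝ) x (invert F₀) := by
  obtain ⟨⟨F, K⟩, hFK⟩ := h
  simp only [laurentMap_apply, Matrix.vecCons_inj, and_true] at hFK
  obtain ⟨H, hH⟩ := exists_eval₂_eq_mul_eval₂_sq (x := x) K
  have hF : F - F₀ = 0 := (eq_zero_of_eval₂_add_mul_eval₂_eq_zero hx hc hc' (H := H)
    (by rw [map_sub, hH]; linear_combination hFK.1)).1
  rw [← hFK.2, sub_eq_zero.1 hF]

theorem exists_eq_eval₂_sq_of_mem_range_laurentMap (hx : Transcendental ℚ (x : ℝ))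
    (hc : c ≠ 0) {a : ℝ} (h : ![c * x * a, 0] ∈ (laurentMap x c).range) :
    ∃ K : ℤ[T;T⁻¹], a = eval₂ (algebraMap ℤ ℝ) (x ^ 2) K := by
  obtain ⟨⟨F, K⟩, hFK⟩ := h
  simp only [laurentMap_apply, Matrix.vecCons_inj, and_true] at hFK
  obtain rfl : F = 0 :=
    invert.injective (eval₂_injective_of_transcendental hx (by rw [hFK.2, map_zero, map_zero]))
  refine ⟨K, mul_left_cancel₀ (mul_ne_zero hc x.ne_zero) ?_⟩
  simpa using hFK.1.symm

theorem exists_eq_zpow_of_mem_range_laurentMap (hx : Transcendental ℚ (x : ℝ)) (hc : c ≠ 0)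
    {a : ℝ} (ha : 0 < a) (h : ![c * x * a, 0] ∈ (laurentMap x c).range)
    (h' : ![c * x * a⁻¹, 0] ∈ (laurentMap x c).range) : ∃ m : ℤ, a = x ^ (2 * m) := by
  obtain ⟨K, hK⟩ := exists_eq_eval₂_sq_of_mem_range_laurentMap hx hc h
  obtain ⟨K', hK'⟩ := exists_eq_eval₂_sq_of_mem_range_laurentMap hx hc h'
  have hx2 : Transcendental ℤ ((x ^ 2 : ℝˣ) : ℝ) := by
    rw [Units.val_pow_eq_pow_val]
    exact (hx.pow two_pos).restrictScalars (algebraMap ℤ ℚ).injective_int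
  have hKK' : K * K' = 1 := eval₂_injective_of_transcendental hx2
    (by rw [map_mul, ← hK, ← hK', map_one, mul_inv_cancel₀ ha.ne'])
  obtain ⟨r, m, hr, rfl⟩ := exists_eq_C_mul_T_of_isUnit (.of_mul_eq_one K' hKK')
  rcases Int.isUnit_iff.1 hr with rfl | rfl
  · exact ⟨m, by simpa [zpow_mul] using hK⟩
  · simp only [algebraMap_int_eq, eq_intCast, Int.cast_one, neg_mul, one_mul,
      map_neg, eval₂_T, Units.val_zpow_eq_zpow_val, Units.val_pow_eq_pow_val] at hK
    have : 0 ≤ ((x : ℝ) ^ 2) ^ m := by positivity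
    linarith

theorem exists_eq_zpow_of_diag_mem_IG (hx : Transcendental ℚ (x : ℝ)) (hc : c ≠ 0) {a b : ℝ}
    (ha : 0 < a) (hb : 0 < b)
    (hB : Matrix.of ![![a, 0], ![0, b]] ∈ IG (AddSubgroup.closure (generators x c))) :
    ∃ m : ℤ, a = x ^ (2 * m) := by
  have hv : ![c * x, 0] ∈ AddSubgroup.closure (generators x c) :=
    AddSubgroup.subset_closure (Or.inr ⟨0, by simp⟩)
  obtain ⟨w, hw, hwv⟩ := exists_vecMul_eq_of_mem_IG hB hv
  simp only [Matrix.vecMul_of_diag, Matrix.vecCons_inj, and_true, mul_eq_zero, hb.ne',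
    or_false] at hwv
  have hw' : w = ![c * x * a⁻¹, 0] := by
    ext i; fin_cases i
    · simp [← hwv.1, ha.ne']
    · simpa using hwv.2
  refine exists_eq_zpow_of_mem_range_laurentMap hx hc ha ?_
    (hw' ▸ closure_generators_le_range_laurentMap x c hw)
  simpa [Matrix.vecMul_of_diag] using
    closure_generators_le_range_laurentMap x c (vecMul_mem_of_mem_IG hB hv)

theorem eq_zpow_neg_of_diag_mem_IG (hx : Transcendental ℚ (x : ℝ)) (hc : IsAlgebraic ℚ c)
    (hc' : Irrational c) {m : ℤ} {b : ℝ}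
    (hB : Matrix.of ![![(x : ℝ) ^ (2 * m), 0], ![0, b]] ∈
      IG (AddSubgroup.closure (generators x c))) :
    b = x ^ (-(2 * m)) := by
  have hv : ![(x : ℝ), x⁻¹] ∈ AddSubgroup.closure (generators x c) :=
    AddSubgroup.subset_closure (Or.inl (Or.inr ⟨0, by simp⟩))
  have hb := eq_of_mem_range_laurentMap hx hc hc' (F₀ := T (2 * m + 1)) (t := (x : ℝ)⁻¹ * b) (by
    convert closure_generators_le_range_laurentMap x c (vecMul_mem_of_mem_IG hB hv) using 1
    rw [Matrix.vecMul_of_diag]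
    ext i; fin_cases i
    · simp [zpow_add₀ x.ne_zero, mul_comm]
    · rfl)
  simp only [invert_T, eval₂_T, Units.val_zpow_eq_zpow_val] at hb
  rw [← mul_inv_cancel_left₀ x.ne_zero b, hb, ← zpow_one_add₀ x.ne_zero]
  ring_nf

theorem antidiag_not_mem_IG (hx : Transcendental ℚ (x : ℝ)) (hc : IsAlgebraic ℚ c)
    (hc' : Irrational c) {a b : ℝ} (ha : 0 < a) :
    Matrix.of ![![0, a], ![b, 0]] ∉ IG (AddSubgroup.closure (generators x c)) := by
  intro hB
  have hv : ![c * x, 0] ∈ AddSubgroup.closure (generators x c) :=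
    AddSubgroup.subset_closure (Or.inr ⟨0, by simp⟩)
  have h := closure_generators_le_range_laurentMap x c (vecMul_mem_of_mem_IG hB hv)
  rw [Matrix.vecMul_of_antidiag] at h
  have := eq_of_mem_range_laurentMap hx hc hc' (F₀ := 0) (t := c * x * a) (by simpa using h)
  simp [hc'.ne_zero, ha.ne'] at this

end Transcendental

section diagZpow

variable (x : ℝˣ) (c : ℝ)

theorem diagZpow_neg_mul (n : ℤ) : diagZpow x (-n) * diagZpow x n = 1 := by
  rw [diagZpow, diagZpow, Matrix.mul_fin_two, Matrix.one_fin_two]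
  simp [← zpow_add₀ x.ne_zero, -zpow_neg]

theorem diagZpow_mapsTo_generators (n : ℤ) :
    Set.MapsTo (fun v => Matrix.vecMul v (diagZpow x n)) (generators x c) (generators x c) := by
  have hx := x.ne_zero
  rintro v ((⟨q, i, rfl⟩ | ⟨i, rfl⟩) | ⟨i, rfl⟩) <;> simp only [diagZpow, Matrix.vecMul_of_diag]
  · refine Or.inl (Or.inl ⟨q, i + n, ?_⟩)
    rw [mul_add, neg_add, zpow_add₀ hx (2 * i), zpow_add₀ hx (-(2 * i))]
    ext j; fin_cases j <;> exact mul_assoc _ _ _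
  · refine Or.inl (Or.inr ⟨i + n, ?_⟩)
    rw [show 2 * (i + n) + 1 = 2 * i + 1 + 2 * n by ring, zpow_add₀ hx (2 * i + 1),
      show -(2 * (i + n)) - 1 = -(2 * i) - 1 + -(2 * n) by ring, zpow_add₀ hx (-(2 * i) - 1)]
    rfl
  · refine Or.inr ⟨i + n, ?_⟩
    rw [show 2 * (i + n) + 1 = 2 * i + 1 + 2 * n by ring, zpow_add₀ hx (2 * i + 1)]
    ext j; fin_cases j
    · exact mul_assoc _ _ _
    · exact zero_mul _

theorem diagZpow_mem_IG (n : ℤ) : diagZpow x n ∈ IG (AddSubgroup.closure (generators x c)) := by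
  refine ⟨?_, ⟨_, _, Even.zpow_pos ⟨n, two_mul n⟩ x.ne_zero,
    Even.zpow_pos ⟨-n, by ring⟩ x.ne_zero, Or.inl rfl⟩, ?_⟩
  · rw [Matrix.isUnit_iff_isUnit_det, diagZpow, Matrix.det_fin_two_of, ← zpow_add₀ x.ne_zero]
    simp
  · have hinv : Set.LeftInvOn (fun v => Matrix.vecMul v (diagZpow x n))
        (fun v => Matrix.vecMul v (diagZpow x (-n))) (generators x c) := fun v _ => by
      simp only [Matrix.vecMul_vecMul, diagZpow_neg_mul, Matrix.vecMul_one]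
    exact AddSubgroup.image_closure_eq_of_image_eq
      (Matrix.vecMulLinear (diagZpow x n)).toAddMonoidHom
      ((hinv.surjOn (diagZpow_mapsTo_generators x c (-n))).image_eq_of_mapsTo
        (diagZpow_mapsTo_generators x c n))

end diagZpow

theorem IG_closure_generators {x : ℝˣ} {c : ℝ} (hx : Transcendental ℚ (x : ℝ))
    (hc : IsAlgebraic ℚ c) (hc' : Irrational c) :
    IG (AddSubgroup.closure (generators x c)) = {B | ∃ n : ℤ, B = diagZpow x n} := by
  ext B
  refine ⟨fun hB => ?_, fun ⟨n, hB⟩ => hB ▸ diagZpow_mem_IG x c n⟩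
  obtain ⟨-, ⟨a, b, ha, hb, rfl | rfl⟩, -⟩ := id hB
  · obtain ⟨m, rfl⟩ := exists_eq_zpow_of_diag_mem_IG hx hc'.ne_zero ha hb hB
    exact ⟨m, by rw [eq_zpow_neg_of_diag_mem_IG hx hc hc' hB, diagZpow]⟩
  · exact absurd hB (antidiag_not_mem_IG hx hc hc' ha)

theorem cube_two_rpow_one_third : ((2 : ℝ) ^ ((1 : ℝ) / 3)) ^ 3 = 2 := by
  rw [← Real.rpow_natCast, ← Real.rpow_mul zero_le_two]
  norm_num

theorem isAlgebraic_two_rpow_one_third : IsAlgebraic ℚ ((2 : ℝ) ^ ((1 : ℝ) / 3)) :=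
  ⟨X ^ 3 - Polynomial.C 2, X_pow_sub_C_ne_zero three_pos _, by
    rw [map_sub, map_pow, aeval_X, aeval_C, cube_two_rpow_one_third]; simp⟩

theorem irrational_two_rpow_one_third : Irrational ((2 : ℝ) ^ ((1 : ℝ) / 3)) :=
  irrational_nrt_of_n_not_dvd_multiplicity 3 two_ne_zero 2
    (by simpa using cube_two_rpow_one_third) (by simp [multiplicity_self])

theorem stmt2_general (α : ℝ) (htr : Transcendental ℚ α) :
    IG (AddSubgroup.closure
        ({v | ∃ q : ℚ, ∃ i : ℤ, v = (q : ℝ) • ![α ^ (2 * i), α ^ (-(2 * i))]} ∪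
         {v | ∃ i : ℤ, v = ![α ^ (2 * i + 1), α ^ (-(2 * i) - 1)]} ∪
         {v | ∃ i : ℤ, v = ![(2 : ℝ) ^ ((1 : ℝ) / 3) * α ^ (2 * i + 1), 0]})) =
      {B | ∃ n : ℤ, B = Matrix.of ![![α ^ (2 * n), 0], ![0, α ^ (-(2 * n))]]} :=
  IG_closure_generators (x := Units.mk0 α fun h => htr (h ▸ isAlgebraic_zero)) htr
    isAlgebraic_two_rpow_one_third irrational_two_rpow_one_third

theorem stmt2 (α : ℝ) (hα : 0 < α) (htr : Transcendental ℚ α) :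
    IG (AddSubgroup.closure
        ({v | ∃ q : ℚ, ∃ i : ℤ, v = (q : ℝ) • ![α ^ (2 * i), α ^ (-(2 * i))]} ∪
         {v | ∃ i : ℤ, v = ![α ^ (2 * i + 1), α ^ (-(2 * i) - 1)]} ∪
         {v | ∃ i : ℤ, v = ![(2 : ℝ) ^ ((1 : ℝ) / 3) * α ^ (2 * i + 1), 0]})) =
      {B | ∃ n : ℤ, B = Matrix.of ![![α ^ (2 * n), 0], ![0, α ^ (-(2 * n))]]} :=
  stmt2_general α htr
end

section
/- Let a and b be positive real algebraic numbers with a ≠ b, a ≠ 1, b ≠ 1. Suppose the minimal polynomials of a and b over ℚ are distinct, and that b is an algebraic integer (its minimal polynomial with integer coefficients is monic). Then for every additive subgroup G of ℝ² containing (1,1) that is invariant under A = [[a,0],[0,b]] (i.e. {vA : v ∈ G} = G), there exists a nonzero integer n such that the map (g,h) ↦ (g, bⁿ·h) maps G onto G; in particular I(G) strictly contains { Aᵐ : m ∈ ℤ }. -/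
/-!
Coordinatewise multiplication makes `ℝ²` a ring, and the `p` with `p * G ⊆ G` form a subring.
It contains `(a, b)^{±1}`, hence `(Q(a), Q(b)) * (a, b)^k` for all `Q ∈ ℤ[X]` and `k ∈ ℤ`.
Distinct minimal polynomials give `P ∈ ℤ[X]` with `P(a) = 0 ≠ P(b) =: c`. As `ℤ[b]` is a
finite free `ℤ`-module, `ℤ[b]/(c)` is finite, so by pigeonhole `b^m (b^n - 1) ∈ c ℤ[b]` for
some `n > 0`; hence `(1, b^{±n}) = 1 + (P(a), P(b)) * (Q(a), Q(b)) * (a, b)^k` for suitable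
`Q` and `k` lie in the subring. Since `a, b ≠ 1`, `diag(1, b^n)` is not a power of `diag(a, b)`.
-/

open Polynomial

theorem exists_pow_add_eq_pow {M : Type*} [Monoid M] [Finite M] (x : M) :
    ∃ m n : ℕ, 0 < n ∧ x ^ (m + n) = x ^ m := by
  obtain ⟨i, j, hij, h⟩ := Finite.exists_ne_map_eq_of_infinite (x ^ · : ℕ → M)
  rcases Nat.lt_or_gt_of_ne hij with hlt | hlt
  · exact ⟨i, j - i, Nat.sub_pos_of_lt hlt, by rw [Nat.add_sub_cancel' hlt.le]; exact h.symm⟩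
  · exact ⟨j, i - j, Nat.sub_pos_of_lt hlt, by rw [Nat.add_sub_cancel' hlt.le]; exact h⟩

theorem Ideal.exists_pow_mul_pow_sub_one_mem {S : Type*} [CommRing S] [IsDomain S]
    [Module.Free ℤ S] [Module.Finite ℤ S] {I : Ideal S} (hI : I ≠ ⊥) (x : S) :
    ∃ m n : ℕ, 0 < n ∧ x ^ m * (x ^ n - 1) ∈ I := by
  have := I.finiteQuotientOfFreeOfNeBot hI
  obtain ⟨m, n, hn, h⟩ := exists_pow_add_eq_pow (Ideal.Quotient.mk I x)
  refine ⟨m, n, hn, ?_⟩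
  rw [← map_pow, ← map_pow, Ideal.Quotient.eq] at h
  convert h using 1
  ring

theorem IsIntegral.exists_pow_mul_pow_sub_one_eq_mul {K : Type*} [Field K] [CharZero K]
    {b c : K} (hb : IsIntegral ℤ b) (hc : c ∈ Algebra.adjoin ℤ {b}) (hc0 : c ≠ 0) :
    ∃ m n : ℕ, 0 < n ∧ ∃ y ∈ Algebra.adjoin ℤ {b}, b ^ m * (b ^ n - 1) = c * y := by
  have : Module.Finite ℤ (Algebra.adjoin ℤ {b}) :=
    Module.Finite.iff_fg.mpr hb.fg_adjoin_singleton
  have hI : Ideal.span {(⟨c, hc⟩ : Algebra.adjoin ℤ {b})} ≠ ⊥ := by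
    rwa [ne_eq, Ideal.span_singleton_eq_bot, ← Subtype.coe_inj]
  obtain ⟨m, n, hn, h⟩ :=
    Ideal.exists_pow_mul_pow_sub_one_mem hI ⟨b, Algebra.self_mem_adjoin_singleton ℤ b⟩
  obtain ⟨y, hy⟩ := Ideal.mem_span_singleton'.mp h
  refine ⟨m, n, hn, y, y.2, ?_⟩
  rw [mul_comm c]
  simpa using (congrArg Subtype.val hy).symm

theorem exists_intPoly_aeval_eq_zero_and_aeval_ne_zero {K : Type*} [Field K] [CharZero K]
    {a b : K} (ha : IsAlgebraic ℚ a) (hab : minpoly ℚ a ≠ minpoly ℚ b) :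
    ∃ P : ℤ[X], aeval a P = 0 ∧ aeval b P ≠ 0 := by
  have hb : aeval b (minpoly ℚ a) ≠ 0 := fun h =>
    hab (minpoly.eq_of_irreducible_of_monic (minpoly.irreducible ha.isIntegral) h
      (minpoly.monic ha.isIntegral))
  set P := IsLocalization.integerNormalization (nonZeroDivisors ℤ) (minpoly ℚ a)
  obtain ⟨D, hD0, hD⟩ :=
    IsLocalization.integerNormalization_spec (nonZeroDivisors ℤ) (minpoly ℚ a)
  have hP : ∀ x : K, aeval x P = D • aeval x (minpoly ℚ a) := fun x => by
    rw [← aeval_map_algebraMap ℚ, hD, map_zsmul]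
  refine ⟨P, by rw [hP, minpoly.aeval, smul_zero], ?_⟩
  rw [hP]
  exact smul_ne_zero (nonZeroDivisors.ne_zero hD0) hb

namespace AddSubgroup

variable {R : Type*} [Ring R] {G : AddSubgroup R}

variable (G) in
def multiplierRing : Subring R where
  carrier := {p | ∀ v ∈ G, p * v ∈ G}
  mul_mem' hp hq v hv := by simpa only [mul_assoc] using hp _ (hq v hv)
  one_mem' v hv := by simpa only [one_mul] using hv
  add_mem' hp hq v hv := by simpa only [add_mul] using G.add_mem (hp v hv) (hq v hv)
  zero_mem' v _ := by simpa only [zero_mul] using G.zero_mem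
  neg_mem' hp v hv := by simpa only [neg_mul] using G.neg_mem (hp v hv)

theorem mem_multiplierRing_of_image_mul_eq {p : R} (h : (p * ·) '' G = G) :
    p ∈ G.multiplierRing := fun _ hv => h.subset (Set.mem_image_of_mem _ hv)

theorem mem_multiplierRing_of_image_mul_eq_of_mul_eq_one {p q : R} (h : (p * ·) '' G = G)
    (hqp : q * p = 1) : q ∈ G.multiplierRing := by
  intro v hv
  obtain ⟨w, hw, rfl⟩ := h.superset hv
  simp only [← mul_assoc, hqp, one_mul]
  exact hw

theorem image_mul_eq_of_mem_multiplierRing {p q : R} (hp : p ∈ G.multiplierRing)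
    (hq : q ∈ G.multiplierRing) (hpq : p * q = 1) : (p * ·) '' G = G := by
  refine subset_antisymm (Set.image_subset_iff.mpr hp) fun v hv => ⟨q * v, hq v hv, ?_⟩
  simp only [← mul_assoc, hpq, one_mul]

theorem aeval_mem_multiplierRing {p : R} (hp : p ∈ G.multiplierRing) (P : ℤ[X]) :
    aeval p P ∈ G.multiplierRing :=
  mem_subalgebraOfSubring.mp <| Algebra.adjoin_le
    (Set.singleton_subset_iff.mpr (mem_subalgebraOfSubring.mpr hp))
    (aeval_mem_adjoin_singleton ℤ p)

theorem zpow_mem_multiplierRing {ι K : Type*} [Field K] {G : AddSubgroup (ι → K)} {p : ι → K}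
    (hp : p ∈ G.multiplierRing) (hp' : p⁻¹ ∈ G.multiplierRing) (m : ℤ) :
    p ^ m ∈ G.multiplierRing := by
  obtain ⟨k, rfl | rfl⟩ := Int.eq_nat_or_neg m
  · simpa only [zpow_natCast] using pow_mem hp k
  · simpa only [zpow_neg, zpow_natCast, inv_pow] using pow_mem hp' k

theorem vec_one_zpow_mem_multiplierRing {K : Type*} [Field K] {G : AddSubgroup (Fin 2 → K)}
    {a b : K} (hb : b ≠ 0) (hu : ![a, b] ∈ G.multiplierRing)
    (hu' : ![a, b]⁻¹ ∈ G.multiplierRing) {P : ℤ[X]} (hP : aeval a P = 0) {y : K}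
    (hy : y ∈ Algebra.adjoin ℤ {b}) {j k : ℤ} (h : b ^ j * (b ^ k - 1) = aeval b P * y) :
    ![1, b ^ k] ∈ G.multiplierRing := by
  rw [Algebra.adjoin_singleton_eq_range_aeval, AlgHom.mem_range] at hy
  obtain ⟨Q, rfl⟩ := hy
  have hk : b ^ k = 1 + aeval b P * aeval b Q * b ^ (-j) := by
    rw [← h, zpow_neg, mul_comm (b ^ j), mul_assoc, mul_inv_cancel₀ (zpow_ne_zero j hb)]
    ring
  have : ![1, b ^ k] = 1 + aeval ![a, b] P * aeval ![a, b] Q * ![a, b] ^ (-j) := by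
    ext i
    fin_cases i <;> simp [aeval_pi_apply₂, hP, hk]
  rw [this]
  exact add_mem (one_mem _) (mul_mem (mul_mem (aeval_mem_multiplierRing hu P)
    (aeval_mem_multiplierRing hu Q)) (zpow_mem_multiplierRing hu hu' (-j)))

theorem inv_vec_one_zpow_mem_multiplierRing {K : Type*} [Field K]
    {G : AddSubgroup (Fin 2 → K)} {a b : K} (hb : b ≠ 0) (hu : ![a, b] ∈ G.multiplierRing)
    (hu' : ![a, b]⁻¹ ∈ G.multiplierRing) {P : ℤ[X]} (hP : aeval a P = 0) {y : K}
    (hy : y ∈ Algebra.adjoin ℤ {b}) {j k : ℤ} (h : b ^ j * (b ^ k - 1) = aeval b P * y) :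
    ![1, b ^ k]⁻¹ ∈ G.multiplierRing := by
  have : ![1, b ^ k]⁻¹ = ![1, b ^ (-k)] := by
    ext i
    fin_cases i <;> simp [zpow_neg]
  rw [this]
  refine vec_one_zpow_mem_multiplierRing hb hu hu' hP (neg_mem hy) (j := j + k) ?_
  rw [mul_neg, ← h, zpow_add₀ hb, zpow_neg]
  field_simp
  ring

end AddSubgroup

namespace Matrix

theorem of_fin_two_diag_eq_diagonal {α : Type*} [Zero α] (x y : α) :
    of ![![x, 0], ![0, y]] = diagonal ![x, y] := by
  ext i j
  fin_cases i <;> fin_cases j <;> rfl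

theorem diagonal_zpow {n K : Type*} [Fintype n] [DecidableEq n] [Field K] {v : n → K}
    (hv : ∀ i, v i ≠ 0) (m : ℤ) : diagonal v ^ m = diagonal (v ^ m) := by
  obtain ⟨k, rfl | rfl⟩ := Int.eq_nat_or_neg m
  · simp only [zpow_natCast, diagonal_pow]
  · rw [zpow_neg_natCast, diagonal_pow]
    refine inv_eq_left_inv ?_
    rw [diagonal_mul_diagonal, ← diagonal_one]
    congr 1
    ext i
    simp [hv i]

theorem vecMul_diagonal_eq_mul {n α : Type*} [Fintype n] [DecidableEq n] [CommSemiring α]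
    (d : n → α) : (fun v => vecMul v (diagonal d)) = (d * ·) := by
  ext v i
  simp [vecMul_diagonal, mul_comm]

end Matrix

open AddSubgroup

theorem diagonal_mem_IG {G : AddSubgroup (Fin 2 → ℝ)} {d : Fin 2 → ℝ} (hd : ∀ i, 0 < d i)
    (h : d ∈ G.multiplierRing) (h' : d⁻¹ ∈ G.multiplierRing) :
    Matrix.diagonal d ∈ IG G := by
  refine ⟨Matrix.isUnit_diagonal.mpr (Pi.isUnit_iff.mpr fun i => (hd i).ne'.isUnit),
    ⟨d 0, d 1, hd 0, hd 1, Or.inl ?_⟩, ?_⟩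
  · rw [Matrix.of_fin_two_diag_eq_diagonal]
    congr
    ext i
    fin_cases i <;> rfl
  · rw [Matrix.vecMul_diagonal_eq_mul]
    refine image_mul_eq_of_mem_multiplierRing h h' ?_
    ext i
    simp [(hd i).ne']

theorem diagonal_zpow_mem_IG {G : AddSubgroup (Fin 2 → ℝ)} {a b : ℝ} (ha : 0 < a) (hb : 0 < b)
    (hu : ![a, b] ∈ G.multiplierRing) (hu' : ![a, b]⁻¹ ∈ G.multiplierRing) (k : ℤ) :
    Matrix.diagonal ![a, b] ^ k ∈ IG G := by
  rw [Matrix.diagonal_zpow (by simp [Fin.forall_fin_two, ha.ne', hb.ne'])]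
  refine diagonal_mem_IG (by simp [Fin.forall_fin_two, zpow_pos ha, zpow_pos hb])
    (zpow_mem_multiplierRing hu hu' k) ?_
  rw [← zpow_neg]
  exact zpow_mem_multiplierRing hu hu' (-k)

theorem diagonal_one_zpow_ne_zpow {a b : ℝ} (ha : 0 < a) (ha1 : a ≠ 1) (hb : 0 < b)
    (hb1 : b ≠ 1) {n : ℤ} (hn : n ≠ 0) (k : ℤ) :
    Matrix.diagonal ![1, b ^ n] ≠ Matrix.diagonal ![a, b] ^ k := by
  rw [Matrix.diagonal_zpow (by simp [Fin.forall_fin_two, ha.ne', hb.ne']),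
    Ne, Matrix.diagonal_injective.eq_iff]
  intro h
  have hk : k = 0 :=
    (zpow_eq_one_iff_right₀ ha.le ha1).mp (by simpa using (congrFun h 0).symm)
  have h1 := congrFun h 1
  simp [hk, zpow_eq_one_iff_right₀ hb.le hb1, hn] at h1

theorem stmt7_general (a b : ℝ) (ha : 0 < a) (hb : 0 < b)
    (halg : IsAlgebraic ℚ a) (ha1 : a ≠ 1) (hb1 : b ≠ 1)
    (hmin : minpoly ℚ a ≠ minpoly ℚ b) (hbint : IsIntegral ℤ b)
    (G : AddSubgroup (Fin 2 → ℝ))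
    (hinv : (fun v => Matrix.vecMul v (Matrix.of ![![a, 0], ![0, b]])) ''
        (G : Set (Fin 2 → ℝ)) = (G : Set (Fin 2 → ℝ))) :
    (∃ n : ℤ, n ≠ 0 ∧
      (fun v : Fin 2 → ℝ => ![v 0, b ^ n * v 1]) ''
        (G : Set (Fin 2 → ℝ)) = (G : Set (Fin 2 → ℝ))) ∧
    {B : Matrix (Fin 2) (Fin 2) ℝ | ∃ m : ℤ, B = (Matrix.of ![![a, 0], ![0, b]]) ^ m} ⊂
      IG G := by
  rw [Matrix.of_fin_two_diag_eq_diagonal] at hinv ⊢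
  rw [Matrix.vecMul_diagonal_eq_mul] at hinv
  have hu : ![a, b] ∈ G.multiplierRing := mem_multiplierRing_of_image_mul_eq hinv
  have hu' : ![a, b]⁻¹ ∈ G.multiplierRing :=
    mem_multiplierRing_of_image_mul_eq_of_mul_eq_one hinv
      (by ext i; fin_cases i <;> simp [ha.ne', hb.ne'])
  obtain ⟨P, hPa, hPb⟩ := exists_intPoly_aeval_eq_zero_and_aeval_ne_zero halg hmin
  obtain ⟨m, n, hn, y, hy, hcy⟩ :=
    hbint.exists_pow_mul_pow_sub_one_eq_mul (aeval_mem_adjoin_singleton ℤ b) hPb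
  replace hcy : b ^ (m : ℤ) * (b ^ (n : ℤ) - 1) = aeval b P * y := by simpa using hcy
  have hB : Matrix.diagonal ![1, b ^ (n : ℤ)] ∈ IG G :=
    diagonal_mem_IG (by simp [Fin.forall_fin_two, pow_pos hb])
      (vec_one_zpow_mem_multiplierRing hb.ne' hu hu' hPa hy hcy)
      (inv_vec_one_zpow_mem_multiplierRing hb.ne' hu hu' hPa hy hcy)
  refine ⟨⟨n, by exact_mod_cast hn.ne', ?_⟩, ?_⟩
  · convert hB.2.2 using 3 with v
    ext i
    fin_cases i <;> simp [Matrix.vecMul_diagonal, mul_comm]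
  · rw [Set.ssubset_iff_of_subset
      (by rintro _ ⟨k, rfl⟩; exact diagonal_zpow_mem_IG ha hb hu hu' k)]
    exact ⟨_, hB, fun ⟨k, hk⟩ =>
      diagonal_one_zpow_ne_zpow ha ha1 hb hb1 (by exact_mod_cast hn.ne') k hk⟩

theorem stmt7 (a b : ℝ) (ha : 0 < a) (hb : 0 < b)
    (halg : IsAlgebraic ℚ a) (hbalg : IsAlgebraic ℚ b)
    (hab : a ≠ b) (ha1 : a ≠ 1) (hb1 : b ≠ 1)
    (hmin : minpoly ℚ a ≠ minpoly ℚ b) (hbint : IsIntegral ℤ b)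
    (G : AddSubgroup (Fin 2 → ℝ)) (h11 : (![1, 1] : Fin 2 → ℝ) ∈ G)
    (hinv : (fun v => Matrix.vecMul v (Matrix.of ![![a, 0], ![0, b]])) ''
        (G : Set (Fin 2 → ℝ)) = (G : Set (Fin 2 → ℝ))) :
    (∃ n : ℤ, n ≠ 0 ∧
      (fun v : Fin 2 → ℝ => ![v 0, b ^ n * v 1]) ''
        (G : Set (Fin 2 → ℝ)) = (G : Set (Fin 2 → ℝ))) ∧
    {B : Matrix (Fin 2) (Fin 2) ℝ | ∃ m : ℤ, B = (Matrix.of ![![a, 0], ![0, b]]) ^ m} ⊂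
      IG G :=
  stmt7_general a b ha hb halg ha1 hb1 hmin hbint G hinv
end
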